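/- Let G be a finite simple graph with a cluster editing set of size at most k. Then for every vertex pair {u,v} contained in at least k+1 distinct induced P3s of G (that is, there are at least k+1 distinct induced P3s whose vertex sets contain both u and v), the graph G' obtained by toggling the pair {u,v} (deleting it if it is an edge, adding it otherwise) has a cluster editing set of size at most k−1. -/
import Mathlib

open SimpleGraph

/-- A cluster graph: every connected component is a complete graph. -/
def IsClusterGraph {V : Type*} (G : SimpleGraph V) : Prop :=
  ∀ u v : V, G.Reachable u v → u ≠ v → G.Adj u v

/-- An induced P3 on the ordered triple (u, v, w). -/
def InducedP3 {V : Type*} (G : SimpleGraph V) (u v w : V) : Prop :=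
  u ≠ v ∧ v ≠ w ∧ u ≠ w ∧ G.Adj u v ∧ G.Adj v w ∧ ¬ G.Adj u w

/-- The (unordered) triple {u, v, w} induces a P3: exactly two of the three pairs are edges. -/
def TripleP3 {V : Type*} (G : SimpleGraph V) (u v w : V) : Prop :=
  u ≠ v ∧ v ≠ w ∧ u ≠ w ∧
    ((G.Adj u v ∧ G.Adj v w ∧ ¬ G.Adj u w) ∨
     (G.Adj u v ∧ G.Adj u w ∧ ¬ G.Adj v w) ∨
     (G.Adj u w ∧ G.Adj v w ∧ ¬ G.Adj u v))

/-- The graph obtained from `G` by toggling the vertex pairs in `M`. -/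
def editGraph {V : Type*} (G : SimpleGraph V) (M : Set (Sym2 V)) : SimpleGraph V :=
  SimpleGraph.fromEdgeSet (symmDiff G.edgeSet M)

/-- `M` is a cluster editing set for `G`. -/
def IsClusterEditingSet {V : Type*} (G : SimpleGraph V) (M : Set (Sym2 V)) : Prop :=
  (∀ e ∈ M, ¬ e.IsDiag) ∧ IsClusterGraph (editGraph G M)

lemma edit_adj_iff {V : Type*} (G : SimpleGraph V) (M : Set (Sym2 V)) {a b : V}
    (hn : s(a, b) ∉ M) (hab : a ≠ b) : (editGraph G M).Adj a b ↔ G.Adj a b := by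
  simp [editGraph, fromEdgeSet_adj, Set.mem_symmDiff, hn, hab]

lemma p3_needs_edit {V : Type*} (G : SimpleGraph V) (M : Set (Sym2 V))
    (hcl : IsClusterGraph (editGraph G M)) {a b c : V} (ht : TripleP3 G a b c) :
    s(a, b) ∈ M ∨ s(b, c) ∈ M ∨ s(a, c) ∈ M := by
  by_contra hco
  push_neg at hco
  obtain ⟨h1, h2, h3⟩ := hco
  obtain ⟨hab, hbc, hac, hcases⟩ := ht
  have e1 := edit_adj_iff G M h1 hab
  have e2 := edit_adj_iff G M h2 hbc
  have e3 := edit_adj_iff G M h3 hac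
  set H := editGraph G M
  have key : ∀ x y z : V, H.Adj x y → H.Adj y z → x ≠ z → H.Adj x z :=
    fun x y z hxy hyz hxz => hcl x z (hxy.reachable.trans hyz.reachable) hxz
  rcases hcases with ⟨p, q, r⟩ | ⟨p, q, r⟩ | ⟨p, q, r⟩
  · exact r (e3.mp (key a b c (e1.mpr p) (e2.mpr q) hac))
  · exact r (e2.mp (key b a c (e1.mpr p).symm (e3.mpr q) hbc))
  · exact r (e1.mp (key a c b (e3.mpr p) (e2.mpr q).symm hab))

theorem toggle_heavy_pair_decreases_budget {V : Type*} [Fintype V] (G : SimpleGraph V)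
    (k : ℕ) (h : ∃ M : Finset (Sym2 V), IsClusterEditingSet G ↑M ∧ M.card ≤ k)
    (u v : V) (huv : u ≠ v)
    (hmany : k + 1 ≤ Set.ncard {w | w ≠ u ∧ w ≠ v ∧ TripleP3 G u v w}) :
    ∃ M' : Finset (Sym2 V),
      IsClusterEditingSet (editGraph G {s(u, v)}) ↑M' ∧ M'.card ≤ k - 1 := by
  classical
  obtain ⟨M, ⟨hMd, hMc⟩, hMk⟩ := h
  -- Step 1 : s(u,v) ∈ M
  have hmem : s(u, v) ∈ M := by
    by_contra hno
    set S : Set V := {w | w ≠ u ∧ w ≠ v ∧ TripleP3 G u v w} with hS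
    have hchoice : ∀ w ∈ S, s(u, w) ∈ M ∨ s(v, w) ∈ M := by
      intro w hw
      obtain ⟨hwu, hwv, ht⟩ := hw
      rcases p3_needs_edit G (↑M) hMc ht with h1 | h2 | h3
      · exact absurd h1 (by simpa using hno)
      · exact Or.inr (by simpa using h2)
      · exact Or.inl (by simpa using h3)
    set f : V → Sym2 V := fun w => if s(u, w) ∈ M then s(u, w) else s(v, w) with hf
    have hmaps : ∀ w ∈ S, f w ∈ (↑M : Set (Sym2 V)) := by
      intro w hw
      by_cases hc : s(u, w) ∈ M
      · simp [hf, hc]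
      · rcases hchoice w hw with h1 | h2
        · exact absurd h1 hc
        · simp [hf, hc, h2]
    have hinj : Set.InjOn f S := by
      intro w1 hw1 w2 hw2 heq
      obtain ⟨hw1u, hw1v, -⟩ := hw1
      obtain ⟨hw2u, hw2v, -⟩ := hw2
      by_cases c1 : s(u, w1) ∈ M <;> by_cases c2 : s(u, w2) ∈ M <;>
          simp only [hf, c1, c2, if_pos, if_neg, if_true, if_false, Sym2.eq_iff] at heq <;>
        rcases heq with ⟨h1, h2⟩ | ⟨h1, h2⟩ <;> simp_all
    have hle : S.ncard ≤ (↑M : Set (Sym2 V)).ncard :=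
      Set.ncard_le_ncard_of_injOn f hmaps hinj (M.finite_toSet)
    rw [Set.ncard_coe_finset] at hle
    omega
  -- Step 2 : M' = M.erase s(u,v)
  refine ⟨M.erase s(u, v), ⟨?_, ?_⟩, ?_⟩
  · intro e he
    exact hMd e (Finset.mem_coe.mpr (Finset.mem_of_mem_erase (Finset.mem_coe.mp he)))
  · have hedge : (editGraph G {s(u, v)}).edgeSet = symmDiff G.edgeSet {s(u, v)} := by
      rw [editGraph, edgeSet_fromEdgeSet]
      ext x
      simp only [Set.mem_diff, Set.mem_setOf_eq, and_iff_left_iff_imp, Set.mem_symmDiff]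
      rintro (⟨hx, -⟩ | ⟨hx, -⟩)
      · exact G.not_isDiag_of_mem_edgeSet hx
      · simp only [Set.mem_singleton_iff] at hx
        subst hx
        simpa using huv
    have hsets : symmDiff (editGraph G {s(u, v)}).edgeSet (↑(M.erase s(u, v)) : Set (Sym2 V))
        = symmDiff G.edgeSet (↑M) := by
      rw [hedge, symmDiff_assoc]
      congr 1
      rw [Finset.coe_erase]
      ext x
      by_cases hx : x = s(u, v) <;>
        simp [Set.mem_symmDiff, hx, hmem]
    have : editGraph (editGraph G {s(u, v)}) ↑(M.erase s(u, v)) = editGraph G ↑M := by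
      simp only [editGraph] at hsets ⊢
      rw [hsets]
    rw [this]
    exact hMc
  · rw [Finset.card_erase_of_mem hmem]
    omega
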